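/- Fix x ∈ (0,1). With p_n(y) = (H_{n+1} - H_y)/(n+1) denoting the marginal probability mass function of Y for sample size n, one has lim_{n→∞} Σ_{y=0}^{⌊nx⌋} p_n(y) = x(1 - ln x). That is, Y/n converges in distribution to the law on (0,1) with density f(w) = -ln(w). -/

import Mathlib

/-!
Summing `p_n(y) = (H_{n+1} - H_y)/(n+1)` over `y ≤ m` reduces, via `∑_{y<k} H_y = k H_k - k`,
to `(m+1)/(n+1) · (H_{n+1} - H_{m+1} + 1)`. With `m = ⌊nx⌋` the prefactor tends to `x`, and since
`H_k - log k → γ`, the difference `H_{n+1} - H_{m+1}` behaves like `log ((n+1)/(m+1)) → -log x`.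
-/

/-- `H m` is the `m`-th harmonic number, with `H 0 = 0`. -/
noncomputable def H (m : ℕ) : ℝ := ∑ j ∈ Finset.range m, 1 / ((j : ℝ) + 1)

open Filter Real Topology Finset

lemma H_eq_harmonic (m : ℕ) : H m = harmonic m := by
  simp [H, harmonic, one_div]

lemma H_succ (m : ℕ) : H (m + 1) = H m + 1 / ((m : ℝ) + 1) :=
  sum_range_succ _ _

lemma sum_range_H (k : ℕ) : ∑ y ∈ range k, H y = k * H k - k := by
  induction k with
  | zero => simp
  | succ k ih =>
    rw [sum_range_succ, ih, H_succ]
    push_cast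
    field_simp
    ring

lemma sum_range_succ_H_sub_div (n m : ℕ) :
    ∑ y ∈ range (m + 1), (H (n + 1) - H y) / ((n : ℝ) + 1)
      = ((m : ℝ) + 1) / ((n : ℝ) + 1) * (H (n + 1) - H (m + 1) + 1) := by
  rw [← sum_div, sum_sub_distrib, sum_range_H, sum_const, card_range, nsmul_eq_mul]
  push_cast
  ring

lemma tendsto_H_sub_log : Tendsto (fun k : ℕ => H k - log k) atTop (𝓝 eulerMascheroniConstant) := by
  simpa [H_eq_harmonic] using tendsto_harmonic_sub_log

lemma tendsto_H_sub_H_add_log_div {a b : ℕ → ℕ} (ha : Tendsto a atTop atTop)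
    (hb : Tendsto b atTop atTop) :
    Tendsto (fun n => H (a n) - H (b n) + log ((b n : ℝ) / a n)) atTop (𝓝 0) := by
  have hlim := (tendsto_H_sub_log.comp ha).sub (tendsto_H_sub_log.comp hb)
  rw [sub_self] at hlim
  refine hlim.congr' ?_
  filter_upwards [ha.eventually_ne_atTop 0, hb.eventually_ne_atTop 0] with n han hbn
  rw [log_div (by exact_mod_cast hbn) (by exact_mod_cast han)]
  simp only [Function.comp_apply]
  ring

lemma tendsto_floor_mul_add_one_div {x : ℝ} (hx : 0 ≤ x) :
    Tendsto (fun n : ℕ => ((⌊(n : ℝ) * x⌋₊ : ℝ) + 1) / ((n : ℝ) + 1)) atTop (𝓝 x) := by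
  have hfloor := (tendsto_nat_floor_mul_div_atTop hx).comp tendsto_natCast_atTop_atTop
  have hlim := (hfloor.add tendsto_one_div_atTop_nhds_zero_nat).mul
    (tendsto_natCast_div_add_atTop (1 : ℝ))
  rw [add_zero, mul_one] at hlim
  refine hlim.congr' ?_
  filter_upwards [eventually_ne_atTop 0] with n hn
  have hn' : (n : ℝ) ≠ 0 := by exact_mod_cast hn
  simp only [Function.comp_apply, mul_comm x]
  field_simp

theorem cdf_limit (x : ℝ) (hx : x ∈ Set.Ioo (0:ℝ) 1) :
    Filter.Tendsto
      (fun n : ℕ =>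
        ∑ y ∈ Finset.range (⌊(n : ℝ) * x⌋₊ + 1), (H (n + 1) - H y) / ((n : ℝ) + 1))
      Filter.atTop (nhds (x * (1 - Real.log x))) := by
  simp only [sum_range_succ_H_sub_div]
  have hratio := tendsto_floor_mul_add_one_div hx.1.le
  have hfloor : Tendsto (fun n : ℕ => ⌊(n : ℝ) * x⌋₊ + 1) atTop atTop :=
    tendsto_add_atTop_nat 1 |>.comp <| tendsto_nat_floor_atTop.comp <|
      tendsto_natCast_atTop_atTop.atTop_mul_const hx.1
  have hdiff := tendsto_H_sub_H_add_log_div (tendsto_add_atTop_nat 1) hfloor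
  push_cast at hdiff
  have hlog := (continuousAt_log hx.1.ne').tendsto.comp hratio
  refine hratio.mul ?_
  convert (hdiff.sub hlog).add_const 1 using 2 with n
  · simp only [Function.comp_apply]
    ring
  · ring
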